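/- Let ξ_k, k ∈ ℕ, be independent mean-zero random variables and λ_k real numbers with S = ∑_{k=0}^∞ λ_k ξ_k converging a.s., such that E[exp{r λ_k ξ_k}] < ∞ for all k and ∑_{k=0}^∞ |E[exp{(r/2) λ_k ξ_k}] - 1| < ∞ for some r > 2. Then E[exp{(r/2) S}] = ∏_{k=0}^∞ E[exp{(r/2) λ_k ξ_k}] < ∞. -/

import Mathlib

/-! Write `S_n = ∑ k < n, Z k`, so that `E e^(S_n) = ∏ k < n, E e^(Z k)` by independence, and
Fatou's lemma gives `E e^S ≤ ∏' k, E e^(Z k)`. Conversely `e^S = e^(S_n) e^(S - S_n)`, where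
`S - S_n` is a.s. a function of `Z n, Z (n + 1), …` and hence independent of `S_n`; thus
`E e^S = (∏ k < n, E e^(Z k)) E e^(S - S_n)` for every `n`, and since `S - S_n → 0` a.s., Fatou's
lemma again gives `liminf E e^(S - S_n) ≥ 1`. Working with `ℝ≥0∞`-valued integrals postpones
every integrability question to the very end. -/

open MeasureTheory ProbabilityTheory Filter Finset Real
open scoped ENNReal Topology

lemma tendsto_sum_Ico_of_tendsto_sum_range {G : Type*} [AddCommGroup G] [TopologicalSpace G]
    [IsTopologicalAddGroup G] {x : ℕ → G} {s : G}
    (h : Tendsto (fun m => ∑ k ∈ range m, x k) atTop (𝓝 s)) (n : ℕ) :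
    Tendsto (fun m => ∑ k ∈ Ico n m, x k) atTop (𝓝 (s - ∑ k ∈ range n, x k)) :=
  (h.sub_const _).congr' <| (eventually_ge_atTop n).mono fun m hm => by
    rw [← sum_range_add_sum_Ico x hm, add_sub_cancel_left]

namespace MeasureTheory

lemma lintegral_le_liminf_of_tendsto_ae {α : Type*} [MeasurableSpace α] {μ : Measure α}
    {f : ℕ → α → ℝ≥0∞} {g : α → ℝ≥0∞} (hf : ∀ n, AEMeasurable (f n) μ)
    (hlim : ∀ᵐ x ∂μ, Tendsto (fun n => f n x) atTop (𝓝 (g x))) :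
    ∫⁻ x, g x ∂μ ≤ liminf (fun n => ∫⁻ x, f n x ∂μ) atTop :=
  calc ∫⁻ x, g x ∂μ = ∫⁻ x, liminf (fun n => f n x) atTop ∂μ :=
        lintegral_congr_ae (hlim.mono fun _ hx => hx.liminf_eq.symm)
    _ ≤ _ := lintegral_liminf_le' hf

end MeasureTheory

namespace ProbabilityTheory

variable {Ω : Type*} {mΩ : MeasurableSpace Ω} {μ : Measure Ω} {Z : ℕ → Ω → ℝ} {S : Ω → ℝ}

lemma iIndepFun.lintegral_exp_sum {ι : Type*} {X : ι → Ω → ℝ} (hX : iIndepFun X μ)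
    (hm : ∀ i, Measurable (X i)) (s : Finset ι) :
    ∫⁻ ω, ENNReal.ofReal (exp (∑ i ∈ s, X i ω)) ∂μ
      = ∏ i ∈ s, ∫⁻ ω, ENNReal.ofReal (exp (X i ω)) ∂μ := by
  have hexp : iIndepFun (fun i ω => ENNReal.ofReal (exp (X i ω))) μ :=
    hX.comp (fun _ x => ENNReal.ofReal (exp x)) fun _ => by fun_prop
  rw [← lintegral_prod_eq_prod_lintegral_of_indepFun s _ hexp fun i => by fun_prop]
  simp_rw [exp_sum, ENNReal.ofReal_prod_of_nonneg fun i _ => (exp_pos _).le]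

/-- A version of `exp (S - ∑ k < n, Z k)`, for `S` the a.s. limit of the partial sums, that is
measurable with respect to `Z n, Z (n + 1), …`. -/
noncomputable def expTail (Z : ℕ → Ω → ℝ) (n : ℕ) (ω : Ω) : ℝ≥0∞ :=
  liminf (fun m => ENNReal.ofReal (exp (∑ k ∈ Ico n m, Z k ω))) atTop

lemma expTail_ae_eq (hS : ∀ᵐ ω ∂μ,
      Tendsto (fun m => ∑ k ∈ range m, Z k ω) atTop (𝓝 (S ω))) (n : ℕ) :
    ∀ᵐ ω ∂μ, expTail Z n ω = ENNReal.ofReal (exp (S ω - ∑ k ∈ range n, Z k ω)) :=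
  hS.mono fun _ h => Tendsto.liminf_eq <|
    (ENNReal.continuous_ofReal.comp continuous_exp).continuousAt.tendsto.comp
      (tendsto_sum_Ico_of_tendsto_sum_range h n)

lemma measurable_expTail (hm : ∀ k, Measurable (Z k)) (n : ℕ) : Measurable (expTail Z n) :=
  Measurable.liminf fun m => by fun_prop

lemma one_le_liminf_lintegral_expTail [IsProbabilityMeasure μ] (hm : ∀ k, Measurable (Z k))
    (hS : ∀ᵐ ω ∂μ, Tendsto (fun m => ∑ k ∈ range m, Z k ω) atTop (𝓝 (S ω))) :
    1 ≤ liminf (fun n => ∫⁻ ω, expTail Z n ω ∂μ) atTop := by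
  have hlim : ∀ᵐ ω ∂μ, Tendsto (fun n => expTail Z n ω) atTop (𝓝 1) := by
    filter_upwards [hS, ae_all_iff.2 (expTail_ae_eq hS)] with ω hω htail
    have hdiff : Tendsto (fun n => S ω - ∑ k ∈ range n, Z k ω) atTop (𝓝 0) := by
      simpa using (tendsto_const_nhds (x := S ω)).sub hω
    simpa [htail, Function.comp_def] using
      ((ENNReal.continuous_ofReal.comp continuous_exp).tendsto 0).comp hdiff
  simpa using
    lintegral_le_liminf_of_tendsto_ae (fun n => (measurable_expTail hm n).aemeasurable) hlim

lemma iIndepFun.lintegral_exp_eq_mul_lintegral_expTail (hZ : iIndepFun Z μ)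
    (hm : ∀ k, Measurable (Z k))
    (hS : ∀ᵐ ω ∂μ, Tendsto (fun m => ∑ k ∈ range m, Z k ω) atTop (𝓝 (S ω))) (n : ℕ) :
    ∫⁻ ω, ENNReal.ofReal (exp (S ω)) ∂μ
      = (∏ k ∈ range n, ∫⁻ ω, ENNReal.ofReal (exp (Z k ω)) ∂μ) * ∫⁻ ω, expTail Z n ω ∂μ := by
  let σZ (T : Set ℕ) := ⨆ k ∈ T, MeasurableSpace.comap (Z k) Real.measurableSpace
  have hσZ (T : Set ℕ) : σZ T ≤ mΩ := iSup₂_le fun k _ => (hm k).comap_le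
  have hZσ {T : Set ℕ} {k : ℕ} (hk : k ∈ T) : Measurable[σZ T] (Z k) :=
    measurable_iff_comap_le.2 <|
      le_iSup₂ (f := fun j (_ : j ∈ T) => MeasurableSpace.comap (Z j) Real.measurableSpace) k hk
  let past := σZ {k | k < n}
  let future := σZ {k | n ≤ k}
  have hindep : Indep past future μ :=
    indep_iSup_of_disjoint (fun k => (hm k).comap_le) ((iIndepFun_iff_iIndep _ _ _).1 hZ)
      (Set.disjoint_left.2 fun _ (hk : _ < n) hk' => hk.not_ge hk')
  have hpast : Measurable[past] fun ω => ENNReal.ofReal (exp (∑ k ∈ range n, Z k ω)) :=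
    ENNReal.measurable_ofReal.comp <| measurable_exp.comp <|
      Finset.measurable_sum _ fun k hk => hZσ (mem_range.1 hk)
  have hfuture : Measurable[future] (expTail Z n) :=
    Measurable.liminf fun m => ENNReal.measurable_ofReal.comp <| measurable_exp.comp <|
      Finset.measurable_sum _ fun k hk => hZσ (mem_Ico.1 hk).1
  rw [← hZ.lintegral_exp_sum hm,
    ← lintegral_mul_eq_lintegral_mul_lintegral_of_independent_measurableSpace
      (hσZ _) (hσZ _) hindep hpast hfuture]
  refine lintegral_congr_ae ((expTail_ae_eq hS n).mono fun ω h => ?_)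
  dsimp only
  rw [h, ← ENNReal.ofReal_mul (exp_pos _).le, ← exp_add, add_sub_cancel]

theorem iIndepFun.lintegral_exp_eq_of_tendsto_prod (hZ : iIndepFun Z μ)
    (hm : ∀ k, Measurable (Z k))
    (hS : ∀ᵐ ω ∂μ, Tendsto (fun m => ∑ k ∈ range m, Z k ω) atTop (𝓝 (S ω))) {L : ℝ≥0∞}
    (hL : Tendsto (fun n => ∏ k ∈ range n, ∫⁻ ω, ENNReal.ofReal (exp (Z k ω)) ∂μ) atTop (𝓝 L)) :
    ∫⁻ ω, ENNReal.ofReal (exp (S ω)) ∂μ = L := by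
  have := hZ.isProbabilityMeasure
  apply le_antisymm
  · calc ∫⁻ ω, ENNReal.ofReal (exp (S ω)) ∂μ
        ≤ liminf (fun n => ∫⁻ ω, ENNReal.ofReal (exp (∑ k ∈ range n, Z k ω)) ∂μ) atTop :=
          lintegral_le_liminf_of_tendsto_ae (fun n => by fun_prop) <| hS.mono fun _ h =>
            (ENNReal.continuous_ofReal.comp continuous_exp).continuousAt.tendsto.comp h
      _ = L := by simp_rw [hZ.lintegral_exp_sum hm]; exact hL.liminf_eq
  · calc L = L * 1 := (mul_one L).symm
      _ ≤ liminf (fun n => ∏ k ∈ range n, ∫⁻ ω, ENNReal.ofReal (exp (Z k ω)) ∂μ) atTop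
          * liminf (fun n => ∫⁻ ω, expTail Z n ω ∂μ) atTop := by
          rw [hL.liminf_eq]
          gcongr
          exact one_le_liminf_lintegral_expTail hm hS
      _ ≤ liminf (fun n => (∏ k ∈ range n, ∫⁻ ω, ENNReal.ofReal (exp (Z k ω)) ∂μ)
          * ∫⁻ ω, expTail Z n ω ∂μ) atTop := ENNReal.le_liminf_mul
      _ = ∫⁻ ω, ENNReal.ofReal (exp (S ω)) ∂μ := by
          simp_rw [← hZ.lintegral_exp_eq_mul_lintegral_expTail hm hS, liminf_const]

theorem iIndepFun.integral_exp_eq_tprod (hZ : iIndepFun Z μ) (hm : ∀ k, Measurable (Z k))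
    (hint : ∀ k, Integrable (fun ω => exp (Z k ω)) μ)
    (hprod : Multipliable fun k => ∫ ω, exp (Z k ω) ∂μ)
    (hS : ∀ᵐ ω ∂μ, Tendsto (fun m => ∑ k ∈ range m, Z k ω) atTop (𝓝 (S ω))) :
    Integrable (fun ω => exp (S ω)) μ ∧ ∫ ω, exp (S ω) ∂μ = ∏' k, ∫ ω, exp (Z k ω) ∂μ := by
  have hexp_nonneg {f : Ω → ℝ} : 0 ≤ᵐ[μ] fun ω => exp (f ω) := ae_of_all _ fun _ => (exp_pos _).le
  have hlint k : ∫⁻ ω, ENNReal.ofReal (exp (Z k ω)) ∂μ = ENNReal.ofReal (∫ ω, exp (Z k ω) ∂μ) :=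
    (ofReal_integral_eq_lintegral_ofReal (hint k) hexp_nonneg).symm
  have hL : ∫⁻ ω, ENNReal.ofReal (exp (S ω)) ∂μ = ENNReal.ofReal (∏' k, ∫ ω, exp (Z k ω) ∂μ) := by
    refine hZ.lintegral_exp_eq_of_tendsto_prod hm hS ?_
    simp_rw [hlint,
      ← ENNReal.ofReal_prod_of_nonneg fun k _ => integral_nonneg fun _ => (exp_pos _).le]
    exact (ENNReal.continuous_ofReal.tendsto _).comp hprod.hasProd.tendsto_prod_nat
  have hmeas : AEStronglyMeasurable (fun ω => exp (S ω)) μ :=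
    aestronglyMeasurable_of_tendsto_ae atTop (fun n => by fun_prop) <|
      hS.mono fun _ h => (continuous_exp.tendsto _).comp h
  refine ⟨⟨hmeas, (hasFiniteIntegral_iff_ofReal hexp_nonneg).2 (hL ▸ ENNReal.ofReal_lt_top)⟩, ?_⟩
  rw [integral_eq_lintegral_of_nonneg_ae hexp_nonneg hmeas, hL,
    ENNReal.toReal_ofReal (tprod_nonneg fun k => integral_nonneg fun _ => (exp_pos _).le)]

end ProbabilityTheory

theorem stmt12_general {Ω : Type*} [MeasurableSpace Ω] (μ : Measure Ω) [IsProbabilityMeasure μ]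
    (ξ : ℕ → Ω → ℝ) (hm : ∀ k, Measurable (ξ k))
    (hindep : iIndepFun ξ μ)
    (lam : ℕ → ℝ) (r : ℝ)
    (hintexp : ∀ k, Integrable (fun ω => Real.exp (r * lam k * ξ k ω)) μ)
    (hsum : Summable (fun k => |(∫ ω, Real.exp (r / 2 * lam k * ξ k ω) ∂μ) - 1|))
    (S : Ω → ℝ)
    (hS : ∀ᵐ ω ∂μ,
      Tendsto (fun n => ∑ k ∈ Finset.range n, lam k * ξ k ω) atTop (nhds (S ω))) :
    Integrable (fun ω => Real.exp (r / 2 * S ω)) μ ∧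
    ∫ ω, Real.exp (r / 2 * S ω) ∂μ = ∏' k : ℕ, ∫ ω, Real.exp (r / 2 * lam k * ξ k ω) ∂μ := by
  set Z : ℕ → Ω → ℝ := fun k ω => r / 2 * lam k * ξ k ω
  have hZ : iIndepFun Z μ :=
    hindep.comp (fun k x => r / 2 * lam k * x) fun _ => measurable_const_mul _
  have hint k : Integrable (fun ω => exp (Z k ω)) μ := by
    have h0 : Integrable (fun ω => exp (0 * ξ k ω)) μ := by simp
    rcases le_total 0 (r * lam k) with h | h
    · exact integrable_exp_mul_of_le_of_le h0 (hintexp k) (by linarith) (by linarith)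
    · exact integrable_exp_mul_of_le_of_le (hintexp k) h0 (by linarith) (by linarith)
  have hprod : Multipliable fun k => ∫ ω, exp (Z k ω) ∂μ := by
    simpa using multipliable_one_add_of_summable (f := fun k => ∫ ω, exp (Z k ω) ∂μ - 1) hsum
  have hZS : ∀ᵐ ω ∂μ, Tendsto (fun n => ∑ k ∈ range n, Z k ω) atTop (𝓝 (r / 2 * S ω)) :=
    hS.mono fun _ h => by simpa [Z, mul_sum, mul_assoc] using h.const_mul (r / 2)
  exact hZ.integral_exp_eq_tprod (fun k => (hm k).const_mul _) hint hprod hZS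

/-- For independent mean-zero `ξ_k` and reals `λ_k` such that `S = ∑ λ_k ξ_k` converges a.s.,
with `E[exp{r λ_k ξ_k}] < ∞` and `∑ |E[exp{(r/2) λ_k ξ_k}] - 1| < ∞` for some `r > 2`,
one has `E[exp{(r/2) S}] = ∏_k E[exp{(r/2) λ_k ξ_k}] < ∞`. -/
theorem stmt12 {Ω : Type*} [MeasurableSpace Ω] (μ : Measure Ω) [IsProbabilityMeasure μ]
    (ξ : ℕ → Ω → ℝ) (hm : ∀ k, Measurable (ξ k))
    (hindep : iIndepFun ξ μ)
    (hmean : ∀ k, ∫ ω, ξ k ω ∂μ = 0)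
    (lam : ℕ → ℝ) (r : ℝ) (hr : 2 < r)
    (hintexp : ∀ k, Integrable (fun ω => Real.exp (r * lam k * ξ k ω)) μ)
    (hsum : Summable (fun k => |(∫ ω, Real.exp (r / 2 * lam k * ξ k ω) ∂μ) - 1|))
    (S : Ω → ℝ) (hSm : Measurable S)
    (hS : ∀ᵐ ω ∂μ,
      Tendsto (fun n => ∑ k ∈ Finset.range n, lam k * ξ k ω) atTop (nhds (S ω))) :
    Integrable (fun ω => Real.exp (r / 2 * S ω)) μ ∧
    ∫ ω, Real.exp (r / 2 * S ω) ∂μ = ∏' k : ℕ, ∫ ω, Real.exp (r / 2 * lam k * ξ k ω) ∂μ :=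
  stmt12_general μ ξ hm hindep lam r hintexp hsum S hS
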